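/- Let A be a real d×n matrix, b ∈ ℝ^d, P a real m×n matrix, f : ℝ → ℝ convex and three times differentiable, ε > 0, R > 0, τ > 0, and w ∈ ℝ^m. Let r_i = R^{−2}(f''(w_i) + ε·Φ(w)/m), suppose there exists x* with A x* = b and ‖P x*‖_∞ ≤ R, and let Δ̃ attain the minimum of ∑_i r_i (PΔ)_i² over {Δ : AΔ = b}. Let I ⊆ { i : |(PΔ̃)_i| ≥ R·τ }, and let w' ∈ ℝ^m satisfy w'_j = w_j for j ∉ I and f''(w'_i) ≤ (1+ε)·f''(w_i) for i ∈ I. Then Φ(w') ≤ (1 + ε·(1+ε)/τ)·Φ(w). -/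

import Mathlib

open Finset

/-! With `F i = f''(w i) ≥ 0` and `Φ = ∑ F`, the resistances satisfy `R² r_i ≥ F i` and
`R² ∑ r = (1 + ε) Φ`. Since `x*` is feasible with `‖P x*‖_∞ ≤ R`, the energy `∑ r_i (PΔ̃)_i²` of
the minimiser is at most `(1 + ε) Φ`, while every `i ∈ I` contributes at least `τ² F i` to it.
Hence `τ² ∑_{i∈I} F i ≤ (1 + ε) Φ`, and together with the trivial bound `∑_{i∈I} F i ≤ Φ`
(enough when `τ ≤ 1`) this gives `τ ∑_{i∈I} F i ≤ (1 + ε) Φ`. Raising `F` by a factor `1 + ε`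
on `I` increases `Φ` by at most `ε ∑_{i∈I} F i`. -/

theorem ConvexOn.deriv_deriv_nonneg {f : ℝ → ℝ} (hconv : ConvexOn ℝ Set.univ f)
    (hf : Differentiable ℝ f) (x : ℝ) : 0 ≤ deriv (deriv f) x :=
  (monotoneOn_univ.mp (hconv.monotoneOn_deriv fun y _ => hf y)).deriv_nonneg

theorem mul_le_of_sq_mul_le {τ S C : ℝ} (hτ : 0 ≤ τ) (hS : 0 ≤ S) (hSC : S ≤ C)
    (hτS : τ ^ 2 * S ≤ C) : τ * S ≤ C := by
  rcases le_total τ 1 with hτ1 | hτ1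
  · calc τ * S ≤ 1 * S := mul_le_mul_of_nonneg_right hτ1 hS
      _ ≤ C := by rwa [one_mul]
  · calc τ * S ≤ τ ^ 2 * S := mul_le_mul_of_nonneg_right (by nlinarith) hS
      _ ≤ C := hτS

theorem sum_le_sum_add_mul_sum_of_le_one_add_mul {ι : Type*} [Fintype ι] [DecidableEq ι]
    {u v : ι → ℝ} {I : Finset ι} {ε : ℝ} (hout : ∀ j ∉ I, u j = v j)
    (hin : ∀ i ∈ I, u i ≤ (1 + ε) * v i) :
    ∑ i, u i ≤ ∑ i, v i + ε * ∑ i ∈ I, v i := by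
  have hcompl : ∑ j ∈ Iᶜ, u j = ∑ j ∈ Iᶜ, v j :=
    sum_congr rfl fun j hj => hout j (mem_compl.mp hj)
  have hI : ∑ i ∈ I, u i ≤ ∑ i ∈ I, v i + ε * ∑ i ∈ I, v i := by
    rw [mul_sum, ← sum_add_distrib]
    exact sum_le_sum fun i hi => by linarith [hin i hi]
  rw [← sum_add_sum_compl I u, ← sum_add_sum_compl I v, hcompl]
  linarith

section Energy

variable {ι : Type*} [Fintype ι] {r y : ι → ℝ}

theorem sum_mul_sq_le_of_norm_le {R : ℝ} (hr : ∀ i, 0 ≤ r i) (hy : ‖y‖ ≤ R) :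
    ∑ i, r i * y i ^ 2 ≤ (∑ i, r i) * R ^ 2 := by
  rw [sum_mul]
  refine sum_le_sum fun i _ => mul_le_mul_of_nonneg_left (sq_le_sq.mpr ?_) (hr i)
  exact (norm_le_pi_norm y i).trans (hy.trans (le_abs_self R))

theorem mul_sum_le_sum_mul_sq_of_width {F : ι → ℝ} {R τ : ℝ} {I : Finset ι}
    (hr : ∀ i, 0 ≤ r i) (hRτ : 0 ≤ R * τ) (hFr : ∀ i, F i ≤ r i * R ^ 2)
    (hwidth : ∀ i ∈ I, R * τ ≤ |y i|) :
    τ ^ 2 * ∑ i ∈ I, F i ≤ ∑ i, r i * y i ^ 2 := by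
  have hterm : ∀ i ∈ I, τ ^ 2 * F i ≤ r i * y i ^ 2 := fun i hi =>
    calc τ ^ 2 * F i ≤ τ ^ 2 * (r i * R ^ 2) := by gcongr; exact hFr i
      _ = r i * (R * τ) ^ 2 := by ring
      _ ≤ r i * y i ^ 2 :=
          mul_le_mul_of_nonneg_left (sq_le_sq.mpr (by rw [abs_of_nonneg hRτ]; exact hwidth i hi))
            (hr i)
  calc τ ^ 2 * ∑ i ∈ I, F i ≤ ∑ i ∈ I, r i * y i ^ 2 := by
        rw [mul_sum]; exact sum_le_sum hterm
    _ ≤ ∑ i, r i * y i ^ 2 :=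
        sum_le_sum_of_subset_of_nonneg (subset_univ I) fun i _ _ => mul_nonneg (hr i) (sq_nonneg _)

end Energy

section Resistance

variable {m : ℕ} (R ε : ℝ) (F : Fin m → ℝ)

noncomputable def resistance (i : Fin m) : ℝ :=
  1 / R ^ 2 * (F i + ε * (∑ j, F j) / m)

variable {R ε F}

theorem resistance_mul_sq (hR : R ≠ 0) (i : Fin m) :
    resistance R ε F i * R ^ 2 = F i + ε * (∑ j, F j) / m := by
  rw [resistance]
  field_simp

theorem le_resistance_mul_sq (hR : R ≠ 0) (hF : ∀ i, 0 ≤ F i) (hε : 0 ≤ ε) (i : Fin m) :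
    F i ≤ resistance R ε F i * R ^ 2 := by
  have := sum_nonneg fun j (_ : j ∈ univ) => hF j
  rw [resistance_mul_sq hR i, le_add_iff_nonneg_right]
  positivity

theorem resistance_nonneg (hF : ∀ i, 0 ≤ F i) (hε : 0 ≤ ε) (i : Fin m) :
    0 ≤ resistance R ε F i := by
  have := sum_nonneg fun j (_ : j ∈ univ) => hF j
  have := hF i
  rw [resistance]
  positivity

theorem sum_resistance_mul_sq (hR : R ≠ 0) :
    (∑ i, resistance R ε F i) * R ^ 2 = (1 + ε) * ∑ j, F j := by
  rcases Nat.eq_zero_or_pos m with rfl | hm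
  · simp
  rw [sum_mul, sum_congr rfl fun i _ => resistance_mul_sq hR i, sum_add_distrib, sum_const,
    card_univ, Fintype.card_fin, nsmul_eq_mul]
  field_simp

end Resistance

theorem phi_width_step_general
    (d n m : ℕ) (A : Matrix (Fin d) (Fin n) ℝ) (b : Fin d → ℝ)
    (P : Matrix (Fin m) (Fin n) ℝ) (f : ℝ → ℝ)
    (hconv : ConvexOn ℝ Set.univ f)
    (hf1 : Differentiable ℝ f)
    (ε R τ : ℝ) (hε : 0 < ε) (hR : 0 < R) (hτ : 0 < τ)
    (w : Fin m → ℝ) (r : Fin m → ℝ)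
    (hr : ∀ i, r i = 1 / R ^ 2 *
      (deriv (deriv f) (w i) + ε * (∑ j, deriv (deriv f) (w j)) / m))
    (xstar : Fin n → ℝ) (hxA : A.mulVec xstar = b)
    (hxR : ‖P.mulVec xstar‖ ≤ R)
    (Δt : Fin n → ℝ)
    (hΔmin : ∀ Δ : Fin n → ℝ, A.mulVec Δ = b →
      (∑ i, r i * (P.mulVec Δt) i ^ 2) ≤ ∑ i, r i * (P.mulVec Δ) i ^ 2)
    (I : Finset (Fin m))
    (hIwidth : ∀ i ∈ I, R * τ ≤ |(P.mulVec Δt) i|)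
    (w' : Fin m → ℝ)
    (hw'nI : ∀ j ∉ I, w' j = w j)
    (hw'I : ∀ i ∈ I, deriv (deriv f) (w' i) ≤ (1 + ε) * deriv (deriv f) (w i)) :
    (∑ i, deriv (deriv f) (w' i)) ≤
      (1 + ε * (1 + ε) / τ) * ∑ i, deriv (deriv f) (w i) := by
  set F : Fin m → ℝ := fun i => deriv (deriv f) (w i)
  obtain rfl : r = resistance R ε F := funext hr
  have hF : ∀ i, 0 ≤ F i := fun i => hconv.deriv_deriv_nonneg hf1 (w i)
  have hΦ : 0 ≤ ∑ i, F i := sum_nonneg fun i _ => hF i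
  have hr0 : ∀ i, 0 ≤ resistance R ε F i := resistance_nonneg hF hε.le
  have henergy : ∑ i, resistance R ε F i * (P.mulVec Δt) i ^ 2 ≤ (1 + ε) * ∑ i, F i :=
    calc _ ≤ ∑ i, resistance R ε F i * (P.mulVec xstar) i ^ 2 := hΔmin xstar hxA
      _ ≤ (∑ i, resistance R ε F i) * R ^ 2 := sum_mul_sq_le_of_norm_le hr0 hxR
      _ = (1 + ε) * ∑ i, F i := sum_resistance_mul_sq hR.ne'
  have hwidth : τ ^ 2 * ∑ i ∈ I, F i ≤ (1 + ε) * ∑ i, F i :=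
    (mul_sum_le_sum_mul_sq_of_width hr0 (by positivity)
      (le_resistance_mul_sq hR.ne' hF hε.le) hIwidth).trans henergy
  have htrivial : ∑ i ∈ I, F i ≤ (1 + ε) * ∑ i, F i :=
    (sum_le_sum_of_subset_of_nonneg (subset_univ I) fun i _ _ => hF i).trans
      (le_mul_of_one_le_left hΦ (by linarith))
  have hI : ∑ i ∈ I, F i ≤ (1 + ε) * (∑ i, F i) / τ := by
    rw [le_div_iff₀ hτ, mul_comm]
    exact mul_le_of_sq_mul_le hτ.le (sum_nonneg fun i _ => hF i) htrivial hwidth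
  calc ∑ i, deriv (deriv f) (w' i) ≤ ∑ i, F i + ε * ∑ i ∈ I, F i :=
        sum_le_sum_add_mul_sum_of_le_one_add_mul (fun j hj => by rw [hw'nI j hj]) hw'I
    _ ≤ ∑ i, F i + ε * ((1 + ε) * (∑ i, F i) / τ) := by gcongr
    _ = (1 + ε * (1 + ε) / τ) * ∑ i, F i := by ring

/-- Lemma 3.2, single width-reduction step bound on Φ:
Φ(w') ≤ (1 + ε(1+ε)/τ)·Φ(w). -/
theorem phi_width_step
    (d n m : ℕ) (A : Matrix (Fin d) (Fin n) ℝ) (b : Fin d → ℝ)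
    (P : Matrix (Fin m) (Fin n) ℝ) (f : ℝ → ℝ)
    (hconv : ConvexOn ℝ Set.univ f)
    (hf1 : Differentiable ℝ f) (hf2 : Differentiable ℝ (deriv f))
    (hf3 : Differentiable ℝ (deriv (deriv f)))
    (ε R τ : ℝ) (hε : 0 < ε) (hR : 0 < R) (hτ : 0 < τ)
    (w : Fin m → ℝ) (r : Fin m → ℝ)
    (hr : ∀ i, r i = 1 / R ^ 2 *
      (deriv (deriv f) (w i) + ε * (∑ j, deriv (deriv f) (w j)) / m))
    (xstar : Fin n → ℝ) (hxA : A.mulVec xstar = b)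
    (hxR : ‖P.mulVec xstar‖ ≤ R)
    (Δt : Fin n → ℝ) (hΔA : A.mulVec Δt = b)
    (hΔmin : ∀ Δ : Fin n → ℝ, A.mulVec Δ = b →
      (∑ i, r i * (P.mulVec Δt) i ^ 2) ≤ ∑ i, r i * (P.mulVec Δ) i ^ 2)
    (I : Finset (Fin m))
    (hIwidth : ∀ i ∈ I, R * τ ≤ |(P.mulVec Δt) i|)
    (w' : Fin m → ℝ)
    (hw'nI : ∀ j ∉ I, w' j = w j)
    (hw'I : ∀ i ∈ I, deriv (deriv f) (w' i) ≤ (1 + ε) * deriv (deriv f) (w i)) :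
    (∑ i, deriv (deriv f) (w' i)) ≤
      (1 + ε * (1 + ε) / τ) * ∑ i, deriv (deriv f) (w i) :=
  phi_width_step_general d n m A b P f hconv hf1 ε R τ hε hR hτ w r hr xstar hxA hxR Δt hΔmin I
    hIwidth w' hw'nI hw'I
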